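/- Synchronizations on disjoint node pairs commute on Stochastic Reo automata: ∂_{a,b}∂_{c,d}(A, r, t) = ∂_{c,d}∂_{a,b}(A, r, t) when a,b,c,d are distinct nodes of Σ. -/

import Mathlib

/-- A guard in disjunctive normal form consists of conjunctions of literals;
a single such conjunction (clause) is given by its positive and negative nodes. -/
structure Clause (N : Type) where
  pos : Finset N
  neg : Finset N

/-- Semantics of a conjunction of literals, as the set of satisfying atoms
(truth assignments) of the free Boolean algebra over `N`. -/
def Clause.sem {N : Type} (g : Clause N) : Set (N → Bool) :=
  {v | (∀ x ∈ g.pos, v x = true) ∧ (∀ x ∈ g.neg, v x = false)}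

/-- `g∖_{ab}`: delete all occurrences of literals over `a` and `b` from `g`. -/
def Clause.del {N : Type} [DecidableEq N] (g : Clause N) (a b : N) : Clause N :=
  ⟨(g.pos.erase a).erase b, (g.neg.erase a).erase b⟩

/-- Transition relations of a (normalized) Reo automaton, whose guard labels
are conjunctions of literals. -/
abbrev CTransRel (N Q : Type) := Q → Clause N → Finset N → Q → Prop

/-- The synchronization `∂_{a,b}` of a normalized Reo automaton: keep the
transitions with `g ≰ ¬a∧¬b` and `a ∈ f ⟺ b ∈ f`, deleting `a,b` from the
guard and the firing set. -/
def syncRel {N Q : Type} [DecidableEq N] (δ : CTransRel N Q) (a b : N) :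
    CTransRel N Q :=
  fun q g' f' q' => ∃ g f, δ q g f q' ∧
    ¬ (Clause.sem g ⊆ Clause.sem ⟨∅, {a, b}⟩) ∧
    (a ∈ f ↔ b ∈ f) ∧
    g' = g.del a b ∧ f' = (f.erase a).erase b

/-- Delay 3-tuples `(I, O, r)` of a Stochastic Reo automaton. -/
abbrev DelayTuple (N : Type) := Finset N × Finset N × ℝ

/-- Rate functions `t : δ → 2^Θ`, presented on all potential transitions. -/
abbrev RateFun (N Q : Type) := Q → Clause N → Finset N → Q → Set (DelayTuple N)

/-- `sync(A,B) = A ∪ B` if `A ∩ B ≠ ∅`, and `A` otherwise. -/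
def syncNodes {N : Type} [DecidableEq N] (A B : Finset N) : Finset N :=
  if (A ∩ B).Nonempty then A ∪ B else A

/-- The rate function of `∂_{a,b}(A,r,t)`: each surviving transition gets
`{(sync(A',{a,b}), sync(B',{a,b}), rate) : (A',B',rate) ∈ t(original)}`. -/
def syncRateFun {N Q : Type} [DecidableEq N] (δ : CTransRel N Q)
    (t : RateFun N Q) (a b : N) : RateFun N Q :=
  fun q g' f' q' =>
    {θ' | ∃ g f θ, δ q g f q' ∧
      ¬ (Clause.sem g ⊆ Clause.sem ⟨∅, {a, b}⟩) ∧ (a ∈ f ↔ b ∈ f) ∧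
      g' = g.del a b ∧ f' = (f.erase a).erase b ∧
      θ ∈ t q g f q' ∧
      θ' = (syncNodes θ.1 {a, b}, syncNodes θ.2.1 {a, b}, θ.2.2)}

/-!
Both synchronizations only erase nodes from guards and firing sets, and `sync` with disjoint
pairs commutes, so the two composites relabel a transition identically. What remains is that
the side conditions transfer: erasing literals over `c, d` from a satisfiable guard does not
change whether it forces `¬a ∧ ¬b`, since a satisfying assignment can be patched at `c, d`.
-/

theorem Finset.erase_erase_erase_erase_comm {N : Type} [DecidableEq N] (s : Finset N)
    (a b c d : N) :
    (((s.erase c).erase d).erase a).erase b = (((s.erase a).erase b).erase c).erase d := by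
  ext
  simp only [Finset.mem_erase]
  tauto

namespace Clause

variable {N : Type} [DecidableEq N]

theorem sem_subset_sem_del (g : Clause N) (c d : N) : g.sem ⊆ (g.del c d).sem :=
  fun _ ⟨hpos, hneg⟩ =>
    ⟨fun x hx => hpos x (Finset.mem_of_mem_erase (Finset.mem_of_mem_erase hx)),
      fun x hx => hneg x (Finset.mem_of_mem_erase (Finset.mem_of_mem_erase hx))⟩

/-- Any satisfying assignment of `g.del c d` becomes one of `g` after overwriting it at `c`
and `d` by a satisfying assignment of `g`; this does not affect literals of `h`. -/
theorem sem_del_subset_of_sem_subset {g h : Clause N} {c d : N}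
    (hc : c ∉ h.pos ∪ h.neg) (hd : d ∉ h.pos ∪ h.neg) (hg : g.sem.Nonempty)
    (hgh : g.sem ⊆ h.sem) : (g.del c d).sem ⊆ h.sem := by
  obtain ⟨v, hvpos, hvneg⟩ := hg
  rintro w ⟨hwpos, hwneg⟩
  let w' : N → Bool := fun x => if x = c ∨ x = d then v x else w x
  have hw'_of_ne {x : N} (hxc : x ≠ c) (hxd : x ≠ d) : w' x = w x := by simp [w', hxc, hxd]
  have hw'g : w' ∈ g.sem := by
    constructor <;> intro x hx <;> by_cases hcd : x = c ∨ x = d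
    · simpa [w', hcd] using hvpos x hx
    · rw [not_or] at hcd
      simpa [w', hcd] using hwpos x (by simp [del, hx, hcd.1, hcd.2])
    · simpa [w', hcd] using hvneg x hx
    · rw [not_or] at hcd
      simpa [w', hcd] using hwneg x (by simp [del, hx, hcd.1, hcd.2])
  obtain ⟨hpos, hneg⟩ := hgh hw'g
  have hne {x : N} (hx : x ∈ h.pos ∪ h.neg) : x ≠ c ∧ x ≠ d :=
    ⟨fun hxc => hc (hxc ▸ hx), fun hxd => hd (hxd ▸ hx)⟩
  refine ⟨fun x hx => ?_, fun x hx => ?_⟩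
  · obtain ⟨hxc, hxd⟩ := hne (Finset.mem_union_left _ hx)
    rw [← hw'_of_ne hxc hxd]
    exact hpos x hx
  · obtain ⟨hxc, hxd⟩ := hne (Finset.mem_union_right _ hx)
    rw [← hw'_of_ne hxc hxd]
    exact hneg x hx

theorem del_comm (g : Clause N) (a b c d : N) : (g.del c d).del a b = (g.del a b).del c d := by
  simp only [del, Finset.erase_erase_erase_erase_comm]

end Clause

theorem syncNodes_comm {N : Type} [DecidableEq N] (A : Finset N) {B C : Finset N}
    (hBC : Disjoint B C) : syncNodes (syncNodes A B) C = syncNodes (syncNodes A C) B := by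
  have hB : (A ∪ C) ∩ B = A ∩ B := by
    rw [Finset.union_inter_distrib_right, Finset.disjoint_iff_inter_eq_empty.mp hBC.symm,
      Finset.union_empty]
  have hC : (A ∪ B) ∩ C = A ∩ C := by
    rw [Finset.union_inter_distrib_right, Finset.disjoint_iff_inter_eq_empty.mp hBC,
      Finset.union_empty]
  by_cases hAB : (A ∩ B).Nonempty <;> by_cases hAC : (A ∩ C).Nonempty <;>
    simp [syncNodes, hAB, hAC, hB, hC, Finset.union_comm B C]

section Sync

variable {N Q : Type} [DecidableEq N] {a b c d : N}

def SyncAdmissible (a b : N) (g : Clause N) (f : Finset N) : Prop :=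
  ¬ g.sem ⊆ Clause.sem ⟨∅, {a, b}⟩ ∧ (a ∈ f ↔ b ∈ f)

theorem SyncAdmissible.swap (hac : a ≠ c) (had : a ≠ d) (hbc : b ≠ c) (hbd : b ≠ d)
    {g : Clause N} {f : Finset N} (hcd : SyncAdmissible c d g f)
    (hab : SyncAdmissible a b (g.del c d) ((f.erase c).erase d)) :
    SyncAdmissible a b g f ∧ SyncAdmissible c d (g.del a b) ((f.erase a).erase b) := by
  obtain ⟨hgcd, hfcd⟩ := hcd
  obtain ⟨hgab, hfab⟩ := hab
  have hg : g.sem.Nonempty := (Set.nonempty_of_not_subset hgcd).mono Set.sdiff_subset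
  refine ⟨⟨fun h => hgab (Clause.sem_del_subset_of_sem_subset ?_ ?_ hg h), ?_⟩,
    fun h => hgcd ((g.sem_subset_sem_del a b).trans h), ?_⟩
  · simp [hac.symm, hbc.symm]
  · simp [had.symm, hbd.symm]
  · simpa [hac, had, hbc, hbd] using hfab
  · simpa [hac.symm, had.symm, hbc.symm, hbd.symm] using hfcd

theorem syncRel_syncRel_le (δ : CTransRel N Q)
    (hac : a ≠ c) (had : a ≠ d) (hbc : b ≠ c) (hbd : b ≠ d) :
    syncRel (syncRel δ c d) a b ≤ syncRel (syncRel δ a b) c d := by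
  rintro q _ _ q' ⟨_, _, ⟨g, f, hδ, hgcd, hfcd, rfl, rfl⟩, hgab, hfab, rfl, rfl⟩
  obtain ⟨⟨hgab, hfab⟩, hgcd, hfcd⟩ :=
    SyncAdmissible.swap hac had hbc hbd ⟨hgcd, hfcd⟩ ⟨hgab, hfab⟩
  exact ⟨_, _, ⟨g, f, hδ, hgab, hfab, rfl, rfl⟩, hgcd, hfcd,
    Clause.del_comm g a b c d, Finset.erase_erase_erase_erase_comm f a b c d⟩

theorem syncRateFun_syncRateFun_le (δ : CTransRel N Q) (t : RateFun N Q)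
    (hac : a ≠ c) (had : a ≠ d) (hbc : b ≠ c) (hbd : b ≠ d) :
    syncRateFun (syncRel δ c d) (syncRateFun δ t c d) a b ≤
      syncRateFun (syncRel δ a b) (syncRateFun δ t a b) c d := by
  rintro q _ _ q' _ ⟨_, _, _, -, hgab, hfab, rfl, rfl,
    ⟨g, f, θ, hδ, hgcd, hfcd, rfl, rfl, hθ, rfl⟩, rfl⟩
  obtain ⟨⟨hgab, hfab⟩, hgcd, hfcd⟩ :=
    SyncAdmissible.swap hac had hbc hbd ⟨hgcd, hfcd⟩ ⟨hgab, hfab⟩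
  have hdisj : Disjoint ({c, d} : Finset N) {a, b} := by
    simp [hac, had, hbc, hbd]
  exact ⟨_, _, _, ⟨g, f, hδ, hgab, hfab, rfl, rfl⟩, hgcd, hfcd,
    Clause.del_comm g a b c d, Finset.erase_erase_erase_erase_comm f a b c d,
    ⟨g, f, θ, hδ, hgab, hfab, rfl, rfl, hθ, rfl⟩, by simp [syncNodes_comm _ hdisj]⟩

end Sync

theorem stmt_15_general {N Q : Type} [DecidableEq N] (Sig : Finset N)
    (δ : CTransRel N Q) (t : RateFun N Q)
    (a b c d : N)
    (hac : a ≠ c) (had : a ≠ d)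
    (hbc : b ≠ c) (hbd : b ≠ d) :
    syncRel (syncRel δ c d) a b = syncRel (syncRel δ a b) c d ∧
    (Sig \ {c, d}) \ {a, b} = (Sig \ {a, b}) \ {c, d} ∧
    syncRateFun (syncRel δ c d) (syncRateFun δ t c d) a b =
      syncRateFun (syncRel δ a b) (syncRateFun δ t a b) c d :=
  ⟨le_antisymm (syncRel_syncRel_le δ hac had hbc hbd)
      (syncRel_syncRel_le δ hac.symm hbc.symm had.symm hbd.symm),
    sdiff_sdiff_comm,
    le_antisymm (syncRateFun_syncRateFun_le δ t hac had hbc hbd)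
      (syncRateFun_syncRateFun_le δ t hac.symm hbc.symm had.symm hbd.symm)⟩

/-- Synchronizations on disjoint node pairs commute on Stochastic Reo automata:
`∂_{a,b}∂_{c,d}(A,r,t) = ∂_{c,d}∂_{a,b}(A,r,t)` for distinct nodes `a,b,c,d`:
the underlying automata, restricted alphabets (on which the arrival-rate
function `r` lives), and rate functions `t` agree. -/
theorem stmt_15 {N Q : Type} [DecidableEq N] (Sig : Finset N)
    (δ : CTransRel N Q) (r : N → ℝ) (t : RateFun N Q)
    (a b c d : N) (haS : a ∈ Sig) (hbS : b ∈ Sig) (hcS : c ∈ Sig) (hdS : d ∈ Sig)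
    (hab : a ≠ b) (hac : a ≠ c) (had : a ≠ d)
    (hbc : b ≠ c) (hbd : b ≠ d) (hcd : c ≠ d) :
    syncRel (syncRel δ c d) a b = syncRel (syncRel δ a b) c d ∧
    (Sig \ {c, d}) \ {a, b} = (Sig \ {a, b}) \ {c, d} ∧
    syncRateFun (syncRel δ c d) (syncRateFun δ t c d) a b =
      syncRateFun (syncRel δ a b) (syncRateFun δ t a b) c d :=
  stmt_15_general Sig δ t a b c d hac had hbc hbd
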